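/- arXiv:1401.6493 — 6 statements merged into one kernel-verified Lean document; each statement's English description precedes it below -/
import Mathlib

section
/- If f belongs to the class 𝓕, then for every z ∈ 𝔻 with |z| = r < 1 one has 1/(1+r)³ ≤ |f'(z)| ≤ 1/(1-r)³. -/
open Complex Metric

/-- The class 𝓕 of normalized locally univalent analytic functions on the unit disk
satisfying `Re (1 + z f''(z)/f'(z)) > -1/2`. -/
def IsInClassF (f : ℂ → ℂ) : Prop :=
  AnalyticOnNhd ℂ f (ball (0 : ℂ) 1) ∧ f 0 = 0 ∧ deriv f 0 = 1 ∧
    (∀ z ∈ ball (0 : ℂ) 1, deriv f z ≠ 0) ∧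
    (∀ z ∈ ball (0 : ℂ) 1, (1 + z * deriv (deriv f) z / deriv f z).re > -(1/2))

/-- The `n`-th section (partial sum) `s_n(f)(z) = z + ∑_{k=2}^n a_k z^k`, where
`a_k = f^{(k)}(0)/k!`. -/
noncomputable def sectionF (f : ℂ → ℂ) (n : ℕ) (z : ℂ) : ℂ :=
  ∑ k ∈ Finset.Icc 1 n, (iteratedDeriv k f 0 / (Nat.factorial k)) * z ^ k

/-!
`N(u) = -u f''(u)/f'(u)` vanishes at `0` and has `Re N < 3/2` on the disk, so the Schwarz lemma
applied to `N/(3 - N)` (the Borel–Carathéodory argument) gives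
`-3r/(1+r) ≤ Re (u f''(u)/f'(u)) ≤ 3r/(1-r)` for `|u| = r`. Along the radius `t ↦ t z` the
derivative of `log |f'(t z)|` is `Re (z f''(t z)/f'(t z))`, which therefore lies between
`-3r/(1+tr)` and `3r/(1-tr)`; integrating over `t ∈ [0, 1]` gives
`-3 log (1+r) ≤ log |f'(z)| ≤ -3 log (1-r)`.
-/

open Set

theorem Complex.re_div_one_add_le {w : ℂ} {s : ℝ} (hw : ‖w‖ ≤ s) (hs : s ≤ 1) :
    (w / (1 + w)).re ≤ s / (1 + s) := by
  have hre : w.re ≤ ‖w‖ := re_le_norm w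
  have hnorm : 0 ≤ ‖w‖ := norm_nonneg w
  have hsq : ‖w‖ ^ 2 = w.re * w.re + w.im * w.im := by rw [Complex.sq_norm, normSq_apply]
  rcases eq_or_ne (1 + w) 0 with h | h
  · have : 0 ≤ s := hnorm.trans hw
    simp [h]; positivity
  rw [div_re, ← add_div, div_le_div_iff₀ (normSq_pos.2 h) (by linarith), normSq_apply]
  simp only [add_re, one_re, add_im, one_im]
  -- reduces to `(1 - s) Re w + |w|² ≤ s`, which holds as `(s - |w|)(1 + |w|) ≥ 0`
  nlinarith [mul_le_mul_of_nonneg_left hre (by linarith : 0 ≤ 1 - s)]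

theorem Complex.borelCaratheodory_re_zero {f : ℂ → ℂ} {M R : ℝ} {z : ℂ} (hM : 0 < M)
    (hf : DifferentiableOn ℂ f (ball 0 R)) (hf₁ : MapsTo f (ball 0 R) {z | z.re ≤ M})
    (hz : z ∈ ball 0 R) (hf₂ : f 0 = 0) : (f z).re ≤ 2 * M * ‖z‖ / (R + ‖z‖) := by
  have hR : 0 < R := pos_of_mem_ball hz
  have hzR : ‖z‖ < R := mem_ball_zero_iff.mp hz
  have hden : ∀ x ∈ ball (0 : ℂ) R, 2 * M - f x ≠ 0 := fun x hx h => by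
    have := congrArg re h
    simp only [sub_re, mul_re, ofReal_re, ofReal_im, re_ofNat, im_ofNat, zero_re] at this
    linarith [show (f x).re ≤ M from hf₁ hx]
  have hnorm_le : ∀ x ∈ ball (0 : ℂ) R, ‖f x‖ ≤ ‖2 * M - f x‖ := fun x hx => by
    have hre : (f x).re ≤ M := hf₁ hx
    rw [← sq_le_sq₀ (norm_nonneg _) (norm_nonneg _), Complex.sq_norm, Complex.sq_norm,
      normSq_apply, normSq_apply]
    simp only [sub_re, sub_im, mul_re, mul_im, ofReal_re, ofReal_im, re_ofNat, im_ofNat]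
    nlinarith
  set w : ℂ → ℂ := fun x => f x / (2 * M - f x) with hw
  have hw_maps : MapsTo w (ball 0 R) (closedBall (w 0) 1) := fun x hx => by
    simp only [hw, hf₂, zero_div, mem_closedBall, dist_zero_right, norm_div]
    exact div_le_one_of_le₀ (hnorm_le x hx) (norm_nonneg _)
  have hschwarz : ‖w z‖ ≤ ‖z‖ / R := by
    simpa [hw, hf₂, inv_mul_eq_div] using
      dist_le_div_mul_dist_of_mapsTo_ball (hf.div (hf.const_sub _) hden) hw_maps hz
  have hfw : f z = 2 * M * (w z / (1 + w z)) := by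
    have := hden z hz
    have hM' : (M : ℂ) ≠ 0 := ofReal_ne_zero.2 hM.ne'
    simp only [hw]; field_simp; ring
  calc (f z).re = 2 * M * (w z / (1 + w z)).re := by
        rw [hfw, ← ofReal_ofNat 2, ← ofReal_mul, re_ofReal_mul]
    _ ≤ 2 * M * (‖z‖ / R / (1 + ‖z‖ / R)) := by
      gcongr; exact re_div_one_add_le hschwarz ((div_le_one hR).2 hzR.le)
    _ = 2 * M * ‖z‖ / (R + ‖z‖) := by field_simp

theorem sub_le_sub_of_hasDerivAt_le {u v u' v' : ℝ → ℝ} {a b : ℝ} (hab : a ≤ b)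
    (hu : ∀ t ∈ Icc a b, HasDerivAt u (u' t) t) (hv : ∀ t ∈ Icc a b, HasDerivAt v (v' t) t)
    (h : ∀ t ∈ Ioo a b, u' t ≤ v' t) : u b - u a ≤ v b - v a := by
  have hderiv : ∀ t ∈ Icc a b, HasDerivAt (v - u) (v' t - u' t) t :=
    fun t ht => (hv t ht).sub (hu t ht)
  have hmono := monotoneOn_of_hasDerivWithinAt_nonneg (convex_Icc a b)
    (fun t ht => (hderiv t ht).continuousAt.continuousWithinAt)
    (fun t ht => (hderiv t (interior_subset ht)).hasDerivWithinAt)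
    (fun t ht => sub_nonneg.2 (h t (by rwa [interior_Icc] at ht)))
    (left_mem_Icc.2 hab) (right_mem_Icc.2 hab) hab
  simp only [Pi.sub_apply] at hmono
  linarith

theorem HasDerivAt.log_norm {γ : ℝ → ℂ} {γ' : ℂ} {t : ℝ} (hγ : HasDerivAt γ γ' t)
    (h0 : γ t ≠ 0) : HasDerivAt (fun s => Real.log ‖γ s‖) (γ' / γ t).re t := by
  have hfun : (fun s => Real.log ‖γ s‖) = fun s => Real.log (‖γ s‖ ^ 2) / 2 := by
    funext s; rw [Real.log_pow]; push_cast; ring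
  have hval : (γ' / γ t).re = 2 * Inner.inner ℝ (γ t) γ' / ‖γ t‖ ^ 2 / 2 := by
    rw [Complex.inner, div_re, Complex.sq_norm]; simp only [mul_re, conj_re, conj_im]; ring
  rw [hfun, hval]
  exact (hγ.norm_sq.log (by positivity)).div_const 2

theorem Complex.ofReal_mul_mem_ball {z : ℂ} {R t : ℝ} (hz : z ∈ ball (0 : ℂ) R)
    (ht : t ∈ Icc 0 1) : (t : ℂ) * z ∈ ball (0 : ℂ) R := by
  simpa [real_smul] using
    (convex_ball (0 : ℂ) R).smul_mem_of_zero_mem (mem_ball_self (pos_of_mem_ball hz)) hz ht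

namespace IsInClassF

variable {f : ℂ → ℂ} {z : ℂ}

theorem re_mul_logDeriv_bounds (hf : IsInClassF f) (hz : z ∈ ball (0 : ℂ) 1) :
    -(3 * ‖z‖ / (1 + ‖z‖)) ≤ (z * deriv (deriv f) z / deriv f z).re ∧
      (z * deriv (deriv f) z / deriv f z).re ≤ 3 * ‖z‖ / (1 - ‖z‖) := by
  obtain ⟨hanalytic, -, -, hne, hre⟩ := hf
  set N : ℂ → ℂ := fun u => -(u * deriv (deriv f) u / deriv f u) with hN
  have hN_diff : DifferentiableOn ℂ N (ball 0 1) :=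
    ((differentiableOn_id.mul hanalytic.deriv.deriv.differentiableOn).div
      hanalytic.deriv.differentiableOn hne).neg
  have hN_maps : MapsTo N (ball 0 1) {w | w.re ≤ 3 / 2} := fun u hu => by
    have := hre u hu
    simp only [add_re, one_re] at this
    simp only [hN, mem_ofPred_eq, neg_re]
    linarith
  have hN₀ : N 0 = 0 := by simp [hN]
  constructor
  · have := borelCaratheodory_re_zero (by norm_num) hN_diff hN_maps hz hN₀
    simp only [hN, neg_re] at this
    linarith
  · have := borelCaratheodory_zero (by norm_num) hN_diff hN_maps one_pos hz hN₀
    simp only [hN, norm_neg] at this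
    linarith [re_le_norm (z * deriv (deriv f) z / deriv f z)]

theorem hasDerivAt_log_norm_deriv (hf : IsInClassF f) (hz : z ∈ ball (0 : ℂ) 1) {t : ℝ}
    (ht : t ∈ Icc 0 1) :
    HasDerivAt (fun s : ℝ => Real.log ‖deriv f (s * z)‖)
      (z * deriv (deriv f) (t * z) / deriv f (t * z)).re t := by
  have htz := ofReal_mul_mem_ball hz ht
  have hf' : HasDerivAt (deriv f) (deriv (deriv f) (t * z)) (t * z) :=
    (hf.1.deriv _ htz).differentiableAt.hasDerivAt
  have hγ := HasDerivAt.comp (t : ℂ) hf' (hasDerivAt_mul_const z)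
  rw [mul_comm z]
  exact hγ.comp_ofReal.log_norm (hf.2.2.2.1 _ htz)

theorem radial_logDeriv_bounds (hf : IsInClassF f) (hz : z ∈ ball (0 : ℂ) 1) {t : ℝ}
    (ht : t ∈ Ioo 0 1) :
    -(3 * ‖z‖ / (1 + t * ‖z‖)) ≤ (z * deriv (deriv f) (t * z) / deriv f (t * z)).re ∧
      (z * deriv (deriv f) (t * z) / deriv f (t * z)).re ≤ 3 * ‖z‖ / (1 - t * ‖z‖) := by
  have htz := ofReal_mul_mem_ball hz (Ioo_subset_Icc_self ht)
  have hnorm : ‖(t : ℂ) * z‖ = t * ‖z‖ := by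
    rw [norm_mul, norm_real, Real.norm_of_nonneg ht.1.le]
  have hre : ((t : ℂ) * z * deriv (deriv f) (t * z) / deriv f (t * z)).re =
      t * (z * deriv (deriv f) (t * z) / deriv f (t * z)).re := by
    rw [mul_assoc, mul_div_assoc, re_ofReal_mul]
  obtain ⟨hlower, hupper⟩ := hf.re_mul_logDeriv_bounds htz
  rw [hnorm, hre] at hlower hupper
  constructor
  · rw [← mul_le_mul_iff_of_pos_left ht.1]
    calc t * -(3 * ‖z‖ / (1 + t * ‖z‖)) = -(3 * (t * ‖z‖) / (1 + t * ‖z‖)) := by ring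
      _ ≤ _ := hlower
  · rw [← mul_le_mul_iff_of_pos_left ht.1]
    calc _ ≤ 3 * (t * ‖z‖) / (1 - t * ‖z‖) := hupper
      _ = t * (3 * ‖z‖ / (1 - t * ‖z‖)) := by ring

theorem log_norm_deriv_le (hf : IsInClassF f) (hz : z ∈ ball (0 : ℂ) 1) :
    Real.log ‖deriv f z‖ ≤ -3 * Real.log (1 - ‖z‖) := by
  have hv : ∀ t ∈ Icc (0 : ℝ) 1,
      HasDerivAt (fun s => -3 * Real.log (1 - s * ‖z‖)) (3 * ‖z‖ / (1 - t * ‖z‖)) t := by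
    intro t ht
    have hpos : 0 < 1 - t * ‖z‖ := by
      nlinarith [ht.2, mem_ball_zero_iff.1 hz, norm_nonneg z]
    exact ((((hasDerivAt_id' t).mul_const ‖z‖).const_sub 1).log hpos.ne').const_mul (-3)
      |>.congr_deriv (by ring)
  have := sub_le_sub_of_hasDerivAt_le zero_le_one
    (fun t ht => hf.hasDerivAt_log_norm_deriv hz ht) hv
    (fun t ht => (hf.radial_logDeriv_bounds hz ht).2)
  simpa [hf.2.2.1] using this

theorem le_log_norm_deriv (hf : IsInClassF f) (hz : z ∈ ball (0 : ℂ) 1) :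
    -3 * Real.log (1 + ‖z‖) ≤ Real.log ‖deriv f z‖ := by
  have hu : ∀ t ∈ Icc (0 : ℝ) 1,
      HasDerivAt (fun s => -3 * Real.log (1 + s * ‖z‖)) (-(3 * ‖z‖ / (1 + t * ‖z‖))) t := by
    intro t ht
    have hpos : 0 < 1 + t * ‖z‖ := by have := ht.1; positivity
    exact ((((hasDerivAt_id' t).mul_const ‖z‖).const_add 1).log hpos.ne').const_mul (-3)
      |>.congr_deriv (by ring)
  have := sub_le_sub_of_hasDerivAt_le zero_le_one hu
    (fun t ht => hf.hasDerivAt_log_norm_deriv hz ht)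
    (fun t ht => (hf.radial_logDeriv_bounds hz ht).1)
  simpa [hf.2.2.1] using this

end IsInClassF

theorem deriv_bounds (f : ℂ → ℂ) (hf : IsInClassF f) (z : ℂ) (hz : z ∈ ball (0 : ℂ) 1) :
    1 / (1 + ‖z‖) ^ 3 ≤ ‖deriv f z‖ ∧
    ‖deriv f z‖ ≤ 1 / (1 - ‖z‖) ^ 3 := by
  have hf'z : 0 < ‖deriv f z‖ := norm_pos_iff.2 (hf.2.2.2.1 z hz)
  have hr : 0 < 1 - ‖z‖ := sub_pos.2 (mem_ball_zero_iff.1 hz)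
  constructor
  · rw [← Real.log_le_log_iff (by positivity) hf'z, one_div, Real.log_inv, Real.log_pow]
    push_cast
    linarith [hf.le_log_norm_deriv hz]
  · rw [← Real.log_le_log_iff hf'z (by positivity), one_div, Real.log_inv, Real.log_pow]
    push_cast
    linarith [hf.log_norm_deriv_le hz]
end

section
/- If f belongs to the class 𝓕, then f' is subordinate to 1/(1-z)³ on 𝔻: there exists an analytic function ω : 𝔻 → ℂ with ω(0) = 0 and |ω(z)| ≤ |z| for all z ∈ 𝔻, such that f'(z) = 1/(1 - ω(z))³ for all z ∈ 𝔻. -/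
/-!
As `f'` has no zeros on the disc and `f'(0) = 1`, it has a logarithm `h` with `h' = f''/f'`, and
`ω := 1 - exp (-h/3)` satisfies `f' = (1 - ω)⁻³` and `3 z ω'/(1 - ω) = z f''/f'`. It remains to
see `|ω| < 1`, after which the Schwarz lemma gives `|ω z| ≤ |z|`. Otherwise let `|ω|` attain its
maximum over some disc `|z| ≤ r` at `z₀` with `|ω z₀| ≥ 1`. Jack's lemma gives
`z₀ ω'(z₀) = k ω(z₀)` with `k ≥ 1`, and as `Re (a/(1-a)) ≤ -1/2` for `|a| ≥ 1`, this forces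
`Re (1 + z₀ f''(z₀)/f'(z₀)) ≤ 1 - 3k/2 ≤ -1/2`.
-/

open Complex Metric

open Filter Set
open scoped ComplexConjugate

lemma le_of_hasDerivAt_of_le_left {φ : ℝ → ℝ} {x a c d : ℝ} (hφ : HasDerivAt φ d x) (ha : a < x)
    (h : ∀ t ∈ Ioo a x, φ t ≤ φ x + c * (t - x)) : c ≤ d := by
  refine ge_of_tendsto ((hasDerivAt_iff_tendsto_slope.1 hφ).mono_left (nhdsLT_le_nhdsNE x)) ?_
  filter_upwards [Ioo_mem_nhdsLT ha] with t ht
  rw [slope_def_field, le_div_iff_of_neg (sub_neg.2 ht.2)]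
  linarith [h t ht]

section RadialDerivative

variable {ω : ℂ → ℂ} {z₀ d : ℂ}

lemma sq_norm_le_re_conj_mul_radial_deriv (hd : HasDerivAt ω d z₀)
    (hbound : ∀ t ∈ Ioo (0:ℝ) 1, ‖ω (t * z₀)‖ ≤ t * ‖ω z₀‖) :
    ‖ω z₀‖ ^ 2 ≤ (conj (ω z₀) * (z₀ * d)).re := by
  set a := ω z₀
  have hφ : HasDerivAt (fun t : ℝ => (conj a * ω (t * z₀)).re) (conj a * (z₀ * d)).re 1 := by
    have hd' : HasDerivAt ω d (((1:ℝ):ℂ) * z₀) := by simpa using hd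
    have hcomp := hd'.comp (h := (· * z₀)) _ (hasDerivAt_mul_const z₀)
    simpa [mul_comm d z₀] using (hcomp.const_mul (conj a)).real_of_complex
  refine le_of_hasDerivAt_of_le_left hφ zero_lt_one fun t ht => ?_
  have h1 : (conj a * ω (((1:ℝ):ℂ) * z₀)).re = ‖a‖ ^ 2 := by
    simp [a, Complex.conj_mul', ← ofReal_pow]
  calc (conj a * ω (t * z₀)).re ≤ ‖conj a * ω (t * z₀)‖ := re_le_norm _
    _ ≤ ‖a‖ * (t * ‖a‖) := by rw [norm_mul, RCLike.norm_conj]; gcongr; exact hbound t ht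
    _ = _ := by rw [h1]; ring

lemma im_conj_mul_radial_deriv_eq_zero (hd : HasDerivAt ω d z₀)
    (hmax : ∀ θ : ℝ, ‖ω (exp (θ * I) * z₀)‖ ≤ ‖ω z₀‖) :
    (conj (ω z₀) * (z₀ * d)).im = 0 := by
  set a := ω z₀
  have hψ : HasDerivAt (fun θ : ℝ => (conj a * ω (exp (θ * I) * z₀)).re)
      (-(conj a * (z₀ * d)).im) 0 := by
    have hrot : HasDerivAt (fun w : ℂ => exp (w * I) * z₀) (I * z₀) ((0:ℝ):ℂ) := by
      simpa using (((hasDerivAt_id (0:ℂ)).mul_const I).cexp).mul_const z₀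
    have hd' : HasDerivAt ω d (exp (((0:ℝ):ℂ) * I) * z₀) := by simpa using hd
    have hcomp := hd'.comp (h := fun w : ℂ => exp (w * I) * z₀) _ hrot
    refine (hcomp.const_mul (conj a)).real_of_complex.congr_deriv ?_
    rw [show conj a * (d * (I * z₀)) = I * (conj a * (z₀ * d)) by ring, I_mul_re]
  have hloc : IsLocalMax (fun θ : ℝ => (conj a * ω (exp (θ * I) * z₀)).re) 0 :=
    Eventually.of_forall fun θ => by
      calc (conj a * ω (exp (θ * I) * z₀)).re ≤ ‖conj a * ω (exp (θ * I) * z₀)‖ := re_le_norm _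
        _ ≤ ‖a‖ * ‖a‖ := by rw [norm_mul, RCLike.norm_conj]; gcongr; exact hmax θ
        _ = _ := by simp [a, Complex.conj_mul', sq]
  exact neg_eq_zero.1 (hloc.hasDerivAt_eq_zero hψ)

end RadialDerivative

/-- Jack's lemma. -/
theorem exists_mul_deriv_eq_of_isMaxOn_norm {ω : ℂ → ℂ} {R : ℝ} {z₀ : ℂ}
    (hω : DifferentiableOn ℂ ω (ball 0 R)) (hω0 : ω 0 = 0) (hz₀ : ‖z₀‖ < R) (hmax : IsMaxOn (‖ω ·‖) (closedBall 0 ‖z₀‖) z₀)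
    (hne : ω z₀ ≠ 0) :
    ∃ k : ℝ, 1 ≤ k ∧ z₀ * deriv ω z₀ = k * ω z₀ := by
  set a := ω z₀
  have hd : HasDerivAt ω (deriv ω z₀) z₀ :=
    (hω.differentiableAt (isOpen_ball.mem_nhds (mem_ball_zero_iff.2 hz₀))).hasDerivAt
  have hschwarz : ∀ y ∈ ball (0:ℂ) ‖z₀‖, ‖ω y‖ ≤ ‖a‖ / ‖z₀‖ * ‖y‖ := fun y hy => by
    simpa [hω0] using dist_le_div_mul_dist_of_mapsTo_ball (hω.mono (ball_subset_ball hz₀.le))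
      (fun w hw => by simpa [hω0] using hmax (ball_subset_closedBall hw)) hy
  have hz₀0 : 0 < ‖z₀‖ := norm_pos_iff.2 fun h => hne (by simp [a, h, hω0])
  have hrad := sq_norm_le_re_conj_mul_radial_deriv hd fun t ht => by
    have hnorm : ‖(t : ℂ) * z₀‖ = t * ‖z₀‖ := by simp [abs_of_pos ht.1]
    calc ‖ω (t * z₀)‖ ≤ ‖a‖ / ‖z₀‖ * (t * ‖z₀‖) := hnorm ▸ hschwarz _ (by
          rw [mem_ball_zero_iff, hnorm]
          nlinarith [ht.2])
      _ = t * ‖a‖ := by field_simp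
  have htan := im_conj_mul_radial_deriv_eq_zero hd fun θ =>
    hmax (by simp [norm_exp_ofReal_mul_I] : exp (θ * I) * z₀ ∈ closedBall 0 ‖z₀‖)
  set A := conj a * (z₀ * deriv ω z₀)
  have ha : (‖a‖ : ℂ) ^ 2 ≠ 0 := by simpa using hne
  refine ⟨A.re / ‖a‖ ^ 2, (one_le_div (by positivity)).2 hrad, ?_⟩
  have hA : (A.re : ℂ) = A := ext rfl (by simp [htan])
  push_cast
  rw [hA, div_mul_eq_mul_div, eq_div_iff ha, ← Complex.conj_mul' a]
  ring

lemma re_div_one_sub_le_neg_half {a : ℂ} (ha1 : a ≠ 1) (ha : 1 ≤ ‖a‖) :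
    (a / (1 - a)).re ≤ -(1 / 2) := by
  have hN : 0 < normSq (1 - a) := normSq_pos.2 (sub_ne_zero.2 ha1.symm)
  have hs : 1 ≤ normSq a := by
    rw [← Complex.sq_norm]
    nlinarith
  rw [normSq_apply] at hs
  rw [div_re, ← add_div, div_le_iff₀ hN, normSq_apply]
  simp only [sub_re, one_re, sub_im, one_im]
  nlinarith

theorem norm_lt_one_of_re_gt_neg_half {ω : ℂ → ℂ} {R : ℝ} (hω : DifferentiableOn ℂ ω (ball 0 R))
    (hω0 : ω 0 = 0) (hω1 : ∀ z ∈ ball (0:ℂ) R, ω z ≠ 1)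
    (hre : ∀ z ∈ ball (0:ℂ) R, -(1 / 2) < (1 + 3 * z * deriv ω z / (1 - ω z)).re) :
    ∀ z ∈ ball (0:ℂ) R, ‖ω z‖ < 1 := by
  intro z₁ hz₁
  by_contra! h1
  rw [mem_ball_zero_iff] at hz₁
  obtain ⟨z₀, hz₀, hmax⟩ := (isCompact_closedBall (0:ℂ) ‖z₁‖).exists_isMaxOn
    (nonempty_closedBall.2 (norm_nonneg _))
    (hω.mono (closedBall_subset_ball hz₁)).continuousOn.norm
  have ha : 1 ≤ ‖ω z₀‖ := h1.trans (hmax (by simp))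
  rw [mem_closedBall_zero_iff] at hz₀
  have hz₀R : z₀ ∈ ball (0:ℂ) R := mem_ball_zero_iff.2 (hz₀.trans_lt hz₁)
  obtain ⟨k, hk, hjack⟩ := exists_mul_deriv_eq_of_isMaxOn_norm hω hω0 (hz₀.trans_lt hz₁)
    (hmax.on_subset (closedBall_subset_closedBall hz₀)) (norm_pos_iff.1 (one_pos.trans_le ha))
  have h := hre z₀ hz₀R
  rw [mul_assoc, hjack, show (3 : ℂ) * (k * ω z₀) / (1 - ω z₀) = (3 * k : ℝ) * (ω z₀ / (1 - ω z₀))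
    by push_cast; ring, add_re, one_re, re_ofReal_mul] at h
  nlinarith [re_div_one_sub_le_neg_half (hω1 z₀ hz₀R) ha]

theorem exists_hasDerivAt_logDeriv_eqOn_exp {F : ℂ → ℂ} {c : ℂ} {r : ℝ} (hr : 0 < r)
    (hF : DifferentiableOn ℂ F (ball c r)) (hF0 : ∀ z ∈ ball c r, F z ≠ 0) (hc : F c = 1) :
    ∃ h : ℂ → ℂ, h c = 0 ∧ (∀ z ∈ ball c r, HasDerivAt h (logDeriv F z) z) ∧
      EqOn F (exp ∘ h) (ball c r) := by
  obtain ⟨h, hc0, hh⟩ :=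
    (((hF.deriv isOpen_ball).div hF hF0).isExactOn_ball).with_val_at c 0
  have hq : ∀ z ∈ ball c r, HasDerivAt (fun w => F w * exp (-h w)) 0 z := fun z hz => by
    have hFz := (hF.differentiableAt (isOpen_ball.mem_nhds hz)).hasDerivAt
    refine (hFz.mul (hh z hz).neg.cexp).congr_deriv ?_
    rw [Pi.neg_apply, Pi.div_apply]
    field_simp [hF0 z hz]
    ring
  refine ⟨h, hc0, hh, fun z hz => ?_⟩
  have hconst := isOpen_ball.is_const_of_deriv_eq_zero (convex_ball c r).isPreconnected
    (fun w hw => (hq w hw).differentiableAt.differentiableWithinAt)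
    (fun w hw => (hq w hw).deriv) hz (mem_ball_self hr)
  simp only [hc, hc0, neg_zero, exp_zero, mul_one, exp_neg] at hconst
  exact (mul_inv_eq_one₀ (exp_ne_zero _)).1 hconst

theorem deriv_subordinate (f : ℂ → ℂ) (hf : IsInClassF f) :
    ∃ ω : ℂ → ℂ, AnalyticOnNhd ℂ ω (ball (0 : ℂ) 1) ∧ ω 0 = 0 ∧
      (∀ z ∈ ball (0 : ℂ) 1, ‖ω z‖ ≤ ‖z‖) ∧
      (∀ z ∈ ball (0 : ℂ) 1, deriv f z = 1 / (1 - ω z) ^ 3) := by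
  obtain ⟨hfa, -, hf'0, hf'ne, hfre⟩ := hf
  obtain ⟨h, h0, hh, hexp⟩ := exists_hasDerivAt_logDeriv_eqOn_exp one_pos
    hfa.deriv.differentiableOn hf'ne hf'0
  set ω : ℂ → ℂ := fun z => 1 - exp (-h z / 3)
  have hω : ∀ z ∈ ball (0:ℂ) 1, HasDerivAt ω (logDeriv (deriv f) z / 3 * (1 - ω z)) z :=
    fun z hz => by
      refine (((hh z hz).neg.div_const 3).cexp.const_sub 1).congr_deriv ?_
      simp only [ω, Pi.neg_apply]
      ring
  have hωd : DifferentiableOn ℂ ω (ball 0 1) :=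
    fun z hz => (hω z hz).differentiableAt.differentiableWithinAt
  have hω0 : ω 0 = 0 := by simp [ω, h0]
  have hω1 : ∀ z, ω z ≠ 1 := by simp [ω, exp_ne_zero]
  have hlt := norm_lt_one_of_re_gt_neg_half hωd hω0 (fun z _ => hω1 z) fun z hz => by
    rw [(hω z hz).deriv]
    convert hfre z hz using 2
    field_simp [sub_ne_zero.2 (hω1 z).symm]
    rw [logDeriv_apply]
    ring
  refine ⟨ω, hωd.analyticOnNhd isOpen_ball, hω0, fun z hz => norm_le_norm_of_mapsTo_ball hωd
    (fun w hw => mem_closedBall_zero_iff.2 (hlt w hw).le) hω0 (mem_ball_zero_iff.1 hz),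
    fun z hz => ?_⟩
  rw [hexp hz, Function.comp_apply, sub_sub_cancel, ← exp_nat_mul, one_div, ← exp_neg]
  congr 1
  push_cast
  ring
end

section
/- For every z ∈ ℂ with |z| ≤ 1/3, one has Re(1/(1-z)³) ≥ 27/64, and equality holds at z = -1/3. -/
/-!
Inversion maps the disk `|w - 1| ≤ 1/3` (where `w = 1 - z`) onto the disk `|u - 9/8| ≤ 3/8`.
On the latter, writing `u = x + iy`, the constraint bounds `y²` and gives
`Re u³ = x³ - 3xy² ≥ x³ - 3x (9/64 - (x - 9/8)²) = 27/64 + 4 (x - 3/4)² (x - 3/16)`,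
which is at least `27/64` because `x ≥ 3/4`; the minimum is attained at `u = 3/4`, i.e. `z = -1/3`.
-/

open Complex

theorem Complex.norm_inv_sub_le_of_norm_sub_one_le {w : ℂ} {r : ℝ} (hr : r < 1)
    (hw : ‖w - 1‖ ≤ r) : ‖w⁻¹ - ((1 - r ^ 2)⁻¹ : ℝ)‖ ≤ r * (1 - r ^ 2)⁻¹ := by
  set c : ℝ := 1 - r ^ 2
  have hr0 : 0 ≤ r := (norm_nonneg _).trans hw
  have hc : 0 < c := by nlinarith
  have hw0 : w ≠ 0 := by
    rintro rfl
    norm_num at hw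
    linarith
  have hsq : normSq (w - 1) ≤ r ^ 2 := by
    rw [← Complex.sq_norm]; gcongr
  have hc' : (c : ℂ) ≠ 0 := ofReal_ne_zero.mpr hc.ne'
  rw [show w⁻¹ - (c⁻¹ : ℝ) = (c - w) / (c * w) by push_cast; field_simp, norm_div, norm_mul,
    norm_real, Real.norm_of_nonneg hc.le, div_le_iff₀ (by positivity),
    show r * c⁻¹ * (c * ‖w‖) = r * ‖w‖ by field_simp,
    ← sq_le_sq₀ (norm_nonneg _) (by positivity), mul_pow, Complex.sq_norm, Complex.sq_norm]
  simp only [normSq_apply, sub_re, sub_im, one_re, one_im, ofReal_re, ofReal_im] at hsq ⊢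
  -- `r² |w|² - |c - w|² = c (r² - |w - 1|²)` since `c = 1 - r²`
  nlinarith [mul_nonneg hc.le (sub_nonneg.mpr hsq)]

theorem Complex.re_pow_three_eq (u : ℂ) : (u ^ 3).re = u.re ^ 3 - 3 * u.re * u.im ^ 2 := by
  simp only [pow_succ, pow_zero, one_mul, mul_re, mul_im]
  ring

theorem Complex.re_pow_three_ge_of_norm_sub_le {u : ℂ} (hu : ‖u - 9 / 8‖ ≤ 3 / 8) :
    27 / 64 ≤ (u ^ 3).re := by
  have hsq : normSq (u - 9 / 8) ≤ (3 / 8) ^ 2 := by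
    rw [← Complex.sq_norm]; gcongr
  simp only [normSq_apply, sub_re, sub_im] at hsq
  norm_num at hsq
  have hx : 3 / 4 ≤ u.re := by nlinarith [sq_nonneg u.im]
  rw [re_pow_three_eq]
  nlinarith [mul_nonneg (by linarith : (0 : ℝ) ≤ u.re)
      (by linarith : 0 ≤ 9 / 64 - (u.re - 9 / 8) ^ 2 - u.im ^ 2),
    mul_nonneg (sq_nonneg (u.re - 3 / 4)) (by linarith : (0 : ℝ) ≤ u.re - 3 / 16)]

theorem re_inv_one_sub_cube_ge :
    (∀ z : ℂ, ‖z‖ ≤ 1/3 → 27/64 ≤ (1 / (1 - z) ^ 3).re) ∧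
    (1 / (1 - (-(1/3) : ℂ)) ^ 3).re = 27/64 := by
  refine ⟨fun z hz => ?_, by norm_num⟩
  have hdisk := norm_inv_sub_le_of_norm_sub_one_le (w := 1 - z) (r := 1 / 3) (by norm_num)
    (by rwa [sub_sub_cancel_left, norm_neg])
  norm_num at hdisk
  rw [one_div, ← inv_pow]
  exact re_pow_three_ge_of_norm_sub_le hdisk
end

section
/- For all complex numbers α and β with |α| ≤ 1 and |β| ≤ 1, one has Re(1 + α + α²/2 + β/6) ≥ 1/12; in particular this quantity is strictly positive. The minimum value 1/12 is attained, e.g., at α = e^{2πi/3}, β = -1. -/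
/-!
Writing `α = x + iy`, the bound `y² ≤ 1 - x²` gives
`Re (1 + α + α²/2) ≥ 1/2 + x + x² = (x + 1/2)² + 1/4 ≥ 1/4`, while `Re (β/6) ≥ -1/6`.
Both bounds are sharp: the first at `α = e^{2πi/3}` (where `x = -1/2` and `|α| = 1`),
the second at `β = -1`.
-/

open Complex Real

namespace Complex

lemma re_sq_eq_two_mul_re_sq_sub_norm_sq (z : ℂ) : (z ^ 2).re = 2 * z.re ^ 2 - ‖z‖ ^ 2 := by
  rw [Complex.sq_norm, normSq_apply, sq, mul_re]
  ring

lemma one_div_four_le_re_one_add_add_sq_div_two {z : ℂ} (hz : ‖z‖ ≤ 1) :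
    1 / 4 ≤ (1 + z + z ^ 2 / 2).re := by
  have hsq : 2 * z.re ^ 2 - 1 ≤ (z ^ 2).re := by
    rw [re_sq_eq_two_mul_re_sq_sub_norm_sq]
    nlinarith [norm_nonneg z]
  simp only [add_re, one_re, div_ofNat_re]
  nlinarith [sq_nonneg (z.re + 1 / 2)]

lemma exp_two_pi_mul_I_div_three_re : (exp (2 * π * I / 3)).re = -1 / 2 := by
  have harg : 2 * π * I / 3 = ((2 * π / 3 : ℝ) : ℂ) * I := by push_cast; ring
  rw [harg, exp_ofReal_mul_I_re, show 2 * π / 3 = π - π / 3 by ring, Real.cos_pi_sub,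
    Real.cos_pi_div_three]
  norm_num

lemma one_add_exp_two_pi_mul_I_div_three_add_sq :
    1 + exp (2 * π * I / 3) + exp (2 * π * I / 3) ^ 2 = 0 := by
  have h := (isPrimitiveRoot_exp 3 (by norm_num)).geom_sum_eq_zero (by norm_num)
  simpa [Finset.sum_range_succ] using h

end Complex

theorem key_inequality :
    (∀ α β : ℂ, ‖α‖ ≤ 1 → ‖β‖ ≤ 1 →
      1/12 ≤ (1 + α + α ^ 2 / 2 + β / 6).re) ∧
    (1 + Complex.exp (2 * Real.pi * Complex.I / 3)
        + Complex.exp (2 * Real.pi * Complex.I / 3) ^ 2 / 2 + (-1 : ℂ) / 6).re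
      = 1/12 := by
  constructor
  · intro α β hα hβ
    have hα' := one_div_four_le_re_one_add_add_sq_div_two hα
    have hβ' : -1 ≤ β.re := by linarith [(abs_le.1 ((abs_re_le_norm β).trans hβ)).1]
    rw [add_re, div_ofNat_re]
    linarith
  · set ω := exp (2 * π * I / 3)
    have hsum : 1 + ω + ω ^ 2 / 2 + (-1 : ℂ) / 6 = (1 + ω) / 2 - 1 / 6 := by
      linear_combination one_add_exp_two_pi_mul_I_div_three_add_sq / 2
    rw [hsum, sub_re, div_ofNat_re, add_re, one_re, exp_two_pi_mul_I_div_three_re]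
    norm_num
end

section
/- If f(z) = z + a_2 z² + a_3 z³ + ⋯ belongs to the class 𝓕, then |a_2| ≤ 3/2 and |3a_3 - 2a_2²| ≤ 3/2. -/
/-!
The function `p = 1 + (2/3) z f''/f'` has `p 0 = 1` and positive real part on the disk, and its
first two Taylor coefficients are `(4/3) a₂` and `(4/3) (3 a₃ - 2 a₂²)`, so both bounds follow from
Carathéodory's inequality `|pₙ| ≤ 2`. That inequality comes from the Cauchy formula on a circle
`|z - c| = r`: since the average of `(z - c)⁻ⁿ conj (p z)` vanishes, `pₙ rⁿ` is the average of
`(z - c)⁻ⁿ 2 Re (p z)`, whose norm is at most `2` times the average of `Re p`, i.e. `2 Re (p c)`.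
-/

open Complex Metric

open Real ComplexConjugate Topology

theorem norm_circleAverage_le {E : Type*} [NormedAddCommGroup E] [NormedSpace ℝ E]
    (f : ℂ → E) (c : ℂ) (R : ℝ) :
    ‖circleAverage f c R‖ ≤ circleAverage (‖f ·‖) c R := by
  simp only [circleAverage, norm_smul, smul_eq_mul, norm_inv, Real.norm_of_nonneg two_pi_pos.le]
  gcongr
  exact intervalIntegral.norm_integral_le_integral_norm two_pi_pos.le

section Caratheodory

variable {f : ℂ → ℂ} {c : ℂ} {R : ℝ}

theorem iteratedDeriv_eq_factorial_mul_circleAverage (hR : 0 < R)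
    (hf : DiffContOnCl ℂ f (ball c R)) (n : ℕ) :
    iteratedDeriv n f c = n.factorial * circleAverage (fun z ↦ (z - c)⁻¹ ^ n * f z) c R := by
  have h := hf.circleIntegral_one_div_sub_center_pow_smul hR n
  rw [circleAverage_eq_circleIntegral hR.ne']
  simp only [smul_eq_mul, ← mul_assoc, one_div, ← pow_succ', ← inv_pow] at h ⊢
  rw [h]
  field_simp [Nat.cast_ne_zero.2 n.factorial_ne_zero]

theorem circleAverage_inv_sub_pow_mul_conj_eq_zero (hR : 0 < R)
    (hf : DiffContOnCl ℂ f (ball c R)) {n : ℕ} (hn : n ≠ 0) :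
    circleAverage (fun z ↦ (z - c)⁻¹ ^ n * conj (f z)) c R = 0 := by
  rw [← abs_of_pos hR] at hf
  set g : ℂ → ℂ := fun z ↦ ((z - c) * ((R ^ 2)⁻¹ : ℝ)) ^ n * f z
  have hg : DiffContOnCl ℂ g (ball c |R|) :=
    (((differentiable_id.sub_const c).mul_const _).pow n).diffContOnCl.smul hf
  -- On the circle `(z - c)⁻¹ = conj (z - c) / R ^ 2`.
  have hconj : ∀ z ∈ sphere c |R|, (z - c)⁻¹ ^ n * conj (f z) = conj (g z) := by
    intro z hz
    rw [abs_of_pos hR, mem_sphere_iff_norm] at hz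
    rw [inv_def, normSq_eq_norm_sq, hz]
    simp [g]
  rw [circleAverage_congr_sphere hconj]
  have := conjCLE.toContinuousLinearMap.circleAverage_comp_comm
    (hg.continuousOn_ball.mono sphere_subset_closedBall).circleIntegrable'
  rw [hg.circleAverage] at this
  exact this.trans (by simp [g, hn])

theorem norm_iteratedDeriv_le_of_re_nonneg_on_sphere (hR : 0 < R)
    (hf : DiffContOnCl ℂ f (ball c R)) (hre : ∀ z ∈ sphere c R, 0 ≤ (f z).re) {n : ℕ}
    (hn : n ≠ 0) :
    ‖iteratedDeriv n f c‖ ≤ 2 * n.factorial * (f c).re / R ^ n := by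
  have hf_cont : ContinuousOn f (sphere c R) :=
    hf.continuousOn_ball.mono sphere_subset_closedBall
  have hk : ContinuousOn (fun z ↦ (z - c)⁻¹ ^ n) (sphere c R) :=
    ((continuousOn_id.sub continuousOn_const).inv₀
      fun z hz ↦ sub_ne_zero.2 (ne_of_mem_sphere hz hR.ne')).pow n
  have hkf : CircleIntegrable (fun z ↦ (z - c)⁻¹ ^ n * f z) c R :=
    (hk.mul hf_cont).circleIntegrable hR.le
  have hkf' : CircleIntegrable (fun z ↦ (z - c)⁻¹ ^ n * conj (f z)) c R :=
    (hk.mul (continuous_conj.comp_continuousOn hf_cont)).circleIntegrable hR.le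
  have hreal : circleAverage (fun z ↦ (z - c)⁻¹ ^ n * f z) c R
      = circleAverage (fun z ↦ (z - c)⁻¹ ^ n * ((2 * (f z).re : ℝ) : ℂ)) c R := by
    simp_rw [← add_conj, mul_add]
    rw [circleAverage_fun_add hkf hkf', circleAverage_inv_sub_pow_mul_conj_eq_zero hR hf hn,
      add_zero]
  have hnorm : circleAverage (fun z ↦ ‖(z - c)⁻¹ ^ n * ((2 * (f z).re : ℝ) : ℂ)‖) c R
      = (R ^ n)⁻¹ * (2 * (f c).re) := by
    rw [circleAverage_congr_sphere (f₂ := fun z ↦ ((R ^ n)⁻¹ * 2) • (f z).re),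
      circleAverage_fun_smul, smul_eq_mul, mul_assoc]
    · congr 2
      have hf' : DiffContOnCl ℂ f (ball c |R|) := by rwa [abs_of_pos hR]
      exact (reCLM.circleAverage_comp_comm (hf_cont.circleIntegrable hR.le)).trans
        (congrArg re hf'.circleAverage)
    · intro z hz
      rw [abs_of_pos hR] at hz
      simp [mem_sphere_iff_norm.1 hz, abs_of_nonneg (hre z hz), mul_assoc]
  calc ‖iteratedDeriv n f c‖
      = n.factorial * ‖circleAverage (fun z ↦ (z - c)⁻¹ ^ n * f z) c R‖ := by
        rw [iteratedDeriv_eq_factorial_mul_circleAverage hR hf, norm_mul, Complex.norm_natCast]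
    _ ≤ n.factorial * ((R ^ n)⁻¹ * (2 * (f c).re)) := by
        rw [hreal, ← hnorm]
        gcongr
        exact norm_circleAverage_le _ c R
    _ = 2 * n.factorial * (f c).re / R ^ n := by ring

theorem norm_iteratedDeriv_le_of_re_nonneg (hR : 0 < R)
    (hf : DifferentiableOn ℂ f (ball c R)) (hre : ∀ z ∈ ball c R, 0 ≤ (f z).re) {n : ℕ}
    (hn : n ≠ 0) :
    ‖iteratedDeriv n f c‖ ≤ 2 * n.factorial * (f c).re / R ^ n := by
  have hlim : Filter.Tendsto (fun r ↦ 2 * n.factorial * (f c).re / r ^ n) (𝓝[<] R)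
      (𝓝 (2 * n.factorial * (f c).re / R ^ n)) :=
    (continuousAt_const.div (continuous_pow n).continuousAt (pow_ne_zero n hR.ne')).tendsto
      |>.mono_left nhdsWithin_le_nhds
  refine ge_of_tendsto hlim ?_
  filter_upwards [Ioo_mem_nhdsLT hR] with r hr
  exact norm_iteratedDeriv_le_of_re_nonneg_on_sphere hr.1
    (hf.diffContOnCl_ball (closedBall_subset_ball hr.2))
    (fun z hz ↦ hre z (sphere_subset_ball hr.2 hz)) hn

end Caratheodory

section IdMul

variable {𝕜 : Type*} [NontriviallyNormedField 𝕜] {h : 𝕜 → 𝕜}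

theorem deriv_id_mul_zero (hh : DifferentiableAt 𝕜 h 0) : deriv (fun z ↦ z * h z) 0 = h 0 := by
  simpa using (hasDerivAt_id' 0).fun_mul hh.hasDerivAt |>.deriv

theorem iteratedDeriv_two_id_mul_zero [CompleteSpace 𝕜] (hh : AnalyticAt 𝕜 h 0) :
    iteratedDeriv 2 (fun z ↦ z * h z) 0 = 2 * deriv h 0 := by
  have hderiv : deriv (fun z ↦ z * h z) =ᶠ[𝓝 0] fun z ↦ h z + z * deriv h z := by
    filter_upwards [hh.eventually_analyticAt] with z hz
    simpa using ((hasDerivAt_id' z).fun_mul hz.differentiableAt.hasDerivAt).deriv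
  rw [iteratedDeriv_succ, iteratedDeriv_one, hderiv.deriv_eq]
  simpa [two_mul] using (hh.differentiableAt.hasDerivAt.fun_add
    ((hasDerivAt_id' 0).fun_mul hh.deriv.differentiableAt.hasDerivAt)).deriv

end IdMul

theorem deriv_logDeriv {𝕜 : Type*} [NontriviallyNormedField 𝕜] {g : 𝕜 → 𝕜} {x : 𝕜}
    (hg : DifferentiableAt 𝕜 g x) (hg' : DifferentiableAt 𝕜 (deriv g) x) (hx : g x ≠ 0) :
    deriv (logDeriv g) x = (deriv (deriv g) x * g x - deriv g x ^ 2) / g x ^ 2 := by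
  unfold logDeriv
  simpa [sq] using (hg'.hasDerivAt.div hg.hasDerivAt hx).deriv

noncomputable def caratheodoryFunction (f : ℂ → ℂ) (z : ℂ) : ℂ :=
  1 + 2 / 3 * (z * logDeriv (deriv f) z)

theorem caratheodoryFunction_zero (f : ℂ → ℂ) : caratheodoryFunction f 0 = 1 := by
  simp [caratheodoryFunction]

namespace IsInClassF

variable {f : ℂ → ℂ}

theorem analyticOnNhd_logDeriv_deriv (hf : IsInClassF f) :
    AnalyticOnNhd ℂ (logDeriv (deriv f)) (ball 0 1) :=
  hf.1.deriv.deriv.div hf.1.deriv hf.2.2.2.1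

theorem analyticOnNhd_caratheodoryFunction (hf : IsInClassF f) :
    AnalyticOnNhd ℂ (caratheodoryFunction f) (ball 0 1) :=
  analyticOnNhd_const.add <| analyticOnNhd_const.mul <|
    analyticOnNhd_id.mul hf.analyticOnNhd_logDeriv_deriv

theorem re_caratheodoryFunction_pos (hf : IsInClassF f) {z : ℂ} (hz : z ∈ ball 0 1) :
    0 < (caratheodoryFunction f z).re := by
  have h := hf.2.2.2.2 z hz
  rw [mul_div_assoc, ← logDeriv_apply] at h
  simp only [caratheodoryFunction, add_re, one_re, mul_re] at h ⊢
  norm_num at h ⊢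
  linarith

theorem logDeriv_deriv_zero (hf : IsInClassF f) :
    logDeriv (deriv f) 0 = iteratedDeriv 2 f 0 := by
  simp [logDeriv_apply, hf.2.2.1, iteratedDeriv_succ']

theorem deriv_logDeriv_deriv_zero (hf : IsInClassF f) :
    deriv (logDeriv (deriv f)) 0 = iteratedDeriv 3 f 0 - iteratedDeriv 2 f 0 ^ 2 := by
  have h0 : (0 : ℂ) ∈ ball 0 1 := mem_ball_self one_pos
  rw [deriv_logDeriv (hf.1.deriv 0 h0).differentiableAt (hf.1.deriv.deriv 0 h0).differentiableAt
    (hf.2.2.2.1 0 h0)]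
  simp [hf.2.2.1, iteratedDeriv_succ']

theorem iteratedDeriv_one_caratheodoryFunction_zero (hf : IsInClassF f) :
    iteratedDeriv 1 (caratheodoryFunction f) 0 = 2 / 3 * iteratedDeriv 2 f 0 := by
  unfold caratheodoryFunction
  rw [iteratedDeriv_const_add one_pos, iteratedDeriv_const_mul_field, iteratedDeriv_one,
    deriv_id_mul_zero (hf.analyticOnNhd_logDeriv_deriv 0 (mem_ball_self one_pos)).differentiableAt,
    hf.logDeriv_deriv_zero]

theorem iteratedDeriv_two_caratheodoryFunction_zero (hf : IsInClassF f) :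
    iteratedDeriv 2 (caratheodoryFunction f) 0 =
      4 / 3 * (iteratedDeriv 3 f 0 - iteratedDeriv 2 f 0 ^ 2) := by
  unfold caratheodoryFunction
  rw [iteratedDeriv_const_add two_pos, iteratedDeriv_const_mul_field,
    iteratedDeriv_two_id_mul_zero (hf.analyticOnNhd_logDeriv_deriv 0 (mem_ball_self one_pos)),
    hf.deriv_logDeriv_deriv_zero]
  ring

theorem norm_iteratedDeriv_caratheodoryFunction_le (hf : IsInClassF f) {n : ℕ} (hn : n ≠ 0) :
    ‖iteratedDeriv n (caratheodoryFunction f) 0‖ ≤ 2 * n.factorial := by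
  simpa [caratheodoryFunction_zero] using norm_iteratedDeriv_le_of_re_nonneg one_pos
    hf.analyticOnNhd_caratheodoryFunction.differentiableOn
    (fun z hz ↦ (hf.re_caratheodoryFunction_pos hz).le) hn

end IsInClassF

theorem a2_a3_bounds (f : ℂ → ℂ) (hf : IsInClassF f) :
    ‖iteratedDeriv 2 f 0 / 2‖ ≤ 3/2 ∧
    ‖3 * (iteratedDeriv 3 f 0 / 6) - 2 * (iteratedDeriv 2 f 0 / 2) ^ 2‖
      ≤ 3/2 := by
  have h₁ := hf.norm_iteratedDeriv_caratheodoryFunction_le one_ne_zero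
  have h₂ := hf.norm_iteratedDeriv_caratheodoryFunction_le two_ne_zero
  rw [hf.iteratedDeriv_one_caratheodoryFunction_zero, norm_mul] at h₁
  rw [hf.iteratedDeriv_two_caratheodoryFunction_zero, norm_mul] at h₂
  rw [show 3 * (iteratedDeriv 3 f 0 / 6) - 2 * (iteratedDeriv 2 f 0 / 2) ^ 2
    = (iteratedDeriv 3 f 0 - iteratedDeriv 2 f 0 ^ 2) / 2 by ring, norm_div, norm_div]
  norm_num at h₁ h₂ ⊢
  constructor <;> linarith
end

section
/- If f belongs to the class 𝓕 and z ∈ 𝔻 with |z| < 1/3, then Re(1 + 2a_2 z + 3a_3 z²) > 0, where a_2, a_3 are the second and third Taylor coefficients of f at 0; that is, the third section s_3(f) satisfies Re((s_3(f))'(z)) > 0 on |z| < 1/3. -/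
/-!
With `p = 1 + z f''/f'`, the condition `Re p > -1/2` says exactly that `ω = (p - 1)/(p + 2)`
maps the disk into itself; since `ω(0) = 0`, the Schwarz lemma makes `φ = ω/z` a self-map of
the closed disk, and Schwarz–Pick at the origin gives `‖φ'(0)‖ ≤ 1 - ‖φ(0)‖²`.
Comparing coefficients, `c₁ = φ(0) = 2a₂/3` and `c₂ = φ'(0) = 2a₃ - 16a₂²/9`, so
`1 + 2a₂z + 3a₃z² = 1 + 3c₁z + 6c₁²z² + (3/2)c₂z²`, and the coefficient bound makes its
real part positive for `‖z‖ < 1/3`.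
-/

open Complex Metric

open Set ComplexConjugate

theorem re_pos_of_norm_le_one_sub_sq {c₁ c₂ z : ℂ} (hc : ‖c₂‖ ≤ 1 - ‖c₁‖ ^ 2)
    (hz : ‖z‖ < 1 / 3) :
    0 < (1 + 3 * c₁ * z + 6 * c₁ ^ 2 * z ^ 2 + 3 / 2 * c₂ * z ^ 2).re := by
  set w := c₁ * z
  have hre : (1 + 3 * c₁ * z + 6 * c₁ ^ 2 * z ^ 2 + 3 / 2 * c₂ * z ^ 2).re
      = 1 + 3 * w.re + 6 * (w.re ^ 2 - w.im ^ 2) + 3 / 2 * (c₂ * z ^ 2).re := by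
    have : 1 + 3 * c₁ * z + 6 * c₁ ^ 2 * z ^ 2 + 3 / 2 * c₂ * z ^ 2
        = 1 + 3 * w + 6 * w ^ 2 + 3 / 2 * (c₂ * z ^ 2) := by ring
    rw [this]
    simp [sq]
  have hw : w.re ^ 2 + w.im ^ 2 = ‖c₁‖ ^ 2 * ‖z‖ ^ 2 := by
    rw [← mul_pow, ← norm_mul, Complex.sq_norm, normSq_apply]; ring
  have hc₂ : -((1 - ‖c₁‖ ^ 2) * ‖z‖ ^ 2) ≤ (c₂ * z ^ 2).re := by
    have : ‖c₂ * z ^ 2‖ ≤ (1 - ‖c₁‖ ^ 2) * ‖z‖ ^ 2 := by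
      rw [norm_mul, norm_pow]; gcongr
    linarith [neg_abs_le (c₂ * z ^ 2).re, abs_re_le_norm (c₂ * z ^ 2)]
  have hc₁ : ‖c₁‖ ^ 2 ≤ 1 := by linarith [norm_nonneg c₂]
  have hz2 : ‖z‖ ^ 2 < 1 / 9 := by nlinarith [norm_nonneg z]
  rw [hre]
  -- the real part is at least `1 + 3x + 12x² - 6‖z‖² ≥ 13/16 - 6‖z‖²`, where `x = Re w`
  nlinarith [sq_nonneg (w.re + 1 / 8), mul_le_mul_of_nonneg_right hc₁ (sq_nonneg ‖z‖)]

theorem normSq_one_sub_conj_mul_sub_normSq_sub (a w : ℂ) :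
    normSq (1 - conj a * w) - normSq (w - a) = (1 - normSq a) * (1 - normSq w) := by
  simp only [normSq_apply, sub_re, sub_im, mul_re, mul_im, conj_re, conj_im, one_re, one_im]
  ring

theorem norm_sub_le_norm_one_sub_conj_mul {a w : ℂ} (ha : ‖a‖ ≤ 1) (hw : ‖w‖ ≤ 1) :
    ‖w - a‖ ≤ ‖1 - conj a * w‖ := by
  have key := normSq_one_sub_conj_mul_sub_normSq_sub a w
  simp only [normSq_eq_norm_sq] at key
  rw [← sq_le_sq₀ (norm_nonneg _) (norm_nonneg _)]
  nlinarith [pow_le_one₀ (norm_nonneg a) ha (n := 2), pow_le_one₀ (norm_nonneg w) hw (n := 2)]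

theorem norm_deriv_zero_le_one_sub_sq_of_norm_lt_one {φ : ℂ → ℂ}
    (hd : DifferentiableOn ℂ φ (ball 0 1)) (hφ : MapsTo φ (ball 0 1) (closedBall 0 1))
    (h₀ : ‖φ 0‖ < 1) : ‖deriv φ 0‖ ≤ 1 - ‖φ 0‖ ^ 2 := by
  set a := φ 0 with ha
  have hden : ∀ z ∈ ball (0 : ℂ) 1, 1 - conj a * φ z ≠ 0 := fun z hz h => by
    have : ‖conj a * φ z‖ < 1 := by
      rw [norm_mul, RCLike.norm_conj]
      exact mul_lt_one_of_nonneg_of_lt_one_left (norm_nonneg _) h₀ (by simpa using hφ hz)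
    rw [← sub_eq_zero.1 h, norm_one] at this
    exact lt_irrefl _ this
  set ψ : ℂ → ℂ := fun z => (φ z - a) / (1 - conj a * φ z)
  have hψd : DifferentiableOn ℂ ψ (ball 0 1) :=
    (hd.sub_const a).div ((differentiableOn_const 1).sub (hd.const_mul _)) hden
  have hψ : MapsTo ψ (ball 0 1) (closedBall (ψ 0) 1) := fun z hz => by
    simp only [ψ, a, sub_self, zero_div, mem_closedBall_zero_iff, norm_div]
    exact div_le_one_of_le₀ (norm_sub_le_norm_one_sub_conj_mul h₀.le (by simpa using hφ hz))
      (norm_nonneg _)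
  have h0 : (0 : ℂ) ∈ ball (0 : ℂ) 1 := mem_ball_self one_pos
  have hpos : 0 < 1 - ‖a‖ ^ 2 := by nlinarith [norm_nonneg a]
  have hderiv : deriv ψ 0 = deriv φ 0 / ((1 - ‖a‖ ^ 2 : ℝ) : ℂ) := by
    have hφ' := (hd.differentiableAt (isOpen_ball.mem_nhds h0)).hasDerivAt
    rw [((hφ'.sub_const a).fun_div ((hφ'.const_mul (conj a)).const_sub 1) (hden 0 h0)).deriv]
    have : 1 - conj a * a ≠ 0 := hden 0 h0
    rw [← ha, sub_self, zero_mul, sub_zero]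
    push_cast
    rw [← conj_mul']
    field_simp
  have := norm_deriv_le_one_of_mapsTo_ball hψd hψ one_pos
  rwa [hderiv, norm_div, norm_real, Real.norm_of_nonneg hpos.le, div_le_one hpos] at this

theorem deriv_zero_eq_zero_of_norm_eq_one {φ : ℂ → ℂ}
    (hd : DifferentiableOn ℂ φ (ball 0 1)) (hφ : MapsTo φ (ball 0 1) (closedBall 0 1))
    (h₀ : ‖φ 0‖ = 1) : deriv φ 0 = 0 := by
  have hnhds : ball (0 : ℂ) 1 ∈ nhds 0 := ball_mem_nhds 0 one_pos
  have hconst : φ =ᶠ[nhds 0] fun _ => φ 0 :=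
    eventually_eq_of_isLocalMax_norm
      (Filter.mem_of_superset hnhds fun z hz => hd.differentiableAt (isOpen_ball.mem_nhds hz))
      (Filter.mem_of_superset hnhds fun z hz => by simpa [h₀] using hφ hz)
  simp [hconst.deriv_eq]

theorem norm_deriv_zero_le_one_sub_sq {φ : ℂ → ℂ}
    (hd : DifferentiableOn ℂ φ (ball 0 1)) (hφ : MapsTo φ (ball 0 1) (closedBall 0 1)) :
    ‖deriv φ 0‖ ≤ 1 - ‖φ 0‖ ^ 2 := by
  rcases (mem_closedBall_zero_iff.1 (hφ (mem_ball_self one_pos))).lt_or_eq with h₀ | h₀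
  · exact norm_deriv_zero_le_one_sub_sq_of_norm_lt_one hd hφ h₀
  · simp [deriv_zero_eq_zero_of_norm_eq_one hd hφ h₀, h₀]

theorem mapsTo_closedBall_of_norm_mul_le_one {ψ : ℂ → ℂ} (hd : DifferentiableOn ℂ ψ (ball 0 1))
    (hψ : ∀ z ∈ ball (0 : ℂ) 1, ‖z * ψ z‖ ≤ 1) : MapsTo ψ (ball 0 1) (closedBall 0 1) := by
  intro z hz
  have hω : MapsTo (fun z => z * ψ z) (ball 0 1) (closedBall ((fun z => z * ψ z) 0) 1) :=
    fun z hz => by simpa using hψ z hz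
  have := norm_dslope_le_div_of_mapsTo_ball (by fun_prop) hω hz
  rcases eq_or_ne z 0 with rfl | hz₀
  · rw [dslope_same, ((hasDerivAt_id' 0).fun_mul
      (hd.differentiableAt (isOpen_ball.mem_nhds hz)).hasDerivAt).deriv] at this
    simpa using this
  · have h := dslope_sub_smul_of_ne ψ hz₀
    simp only [sub_zero, smul_eq_mul] at h
    simpa [h] using this

theorem norm_lt_norm_three_mul_add {u v : ℂ} (hu : u ≠ 0) (h : -(1 / 2) < (1 + v / u).re) :
    ‖v‖ < ‖3 * u + v‖ := by
  set t := v / u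
  have ht : ‖t‖ < ‖3 + t‖ := by
    rw [← sq_lt_sq₀ (norm_nonneg _) (norm_nonneg _), Complex.sq_norm, Complex.sq_norm,
      normSq_apply, normSq_apply]
    simp only [add_re, add_im, one_re] at h ⊢
    norm_num
    nlinarith
  calc ‖v‖ = ‖u‖ * ‖t‖ := by rw [norm_div, mul_div_cancel₀ _ (norm_ne_zero_iff.2 hu)]
    _ < ‖u‖ * ‖3 + t‖ := mul_lt_mul_of_pos_left ht (norm_pos_iff.2 hu)
    _ = ‖3 * u + v‖ := by rw [← norm_mul, mul_add, mul_div_cancel₀ _ hu, mul_comm]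

/-- `ω(z)/z`, where `ω = (p - 1)/(p + 2)` and `p = 1 + z f''/f'`. -/
noncomputable def schwarzQuotient (f : ℂ → ℂ) (z : ℂ) : ℂ :=
  deriv (deriv f) z / (3 * deriv f z + z * deriv (deriv f) z)

section SchwarzQuotient

variable {f : ℂ → ℂ}

theorem schwarzQuotient_zero (hf : deriv f 0 = 1) :
    schwarzQuotient f 0 = deriv (deriv f) 0 / 3 := by
  simp [schwarzQuotient, hf]

theorem deriv_schwarzQuotient_zero (hf : AnalyticAt ℂ f 0) (hf₁ : deriv f 0 = 1) :
    deriv (schwarzQuotient f) 0 =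
      deriv (deriv (deriv f)) 0 / 3 - 4 / 9 * deriv (deriv f) 0 ^ 2 := by
  have h₁ : HasDerivAt (deriv f) (deriv (deriv f) 0) 0 :=
    hf.deriv.differentiableAt.hasDerivAt
  have h₂ : HasDerivAt (deriv (deriv f)) (deriv (deriv (deriv f)) 0) 0 :=
    hf.deriv.deriv.differentiableAt.hasDerivAt
  have hden := (h₁.const_mul 3).fun_add ((hasDerivAt_id' 0).fun_mul h₂)
  unfold schwarzQuotient
  rw [(h₂.fun_div hden (by simp [hf₁])).deriv, hf₁]
  field_simp
  ring

end SchwarzQuotient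

namespace IsInClassF

variable {f : ℂ → ℂ}

theorem norm_mul_deriv_deriv_lt (hf : IsInClassF f) {z : ℂ} (hz : z ∈ ball (0 : ℂ) 1) :
    ‖z * deriv (deriv f) z‖ < ‖3 * deriv f z + z * deriv (deriv f) z‖ := by
  obtain ⟨-, -, -, hne, hre⟩ := hf
  exact norm_lt_norm_three_mul_add (hne z hz) (hre z hz)

theorem three_mul_deriv_add_ne_zero (hf : IsInClassF f) {z : ℂ} (hz : z ∈ ball (0 : ℂ) 1) :
    3 * deriv f z + z * deriv (deriv f) z ≠ 0 :=
  norm_pos_iff.1 ((norm_nonneg _).trans_lt (hf.norm_mul_deriv_deriv_lt hz))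

theorem differentiableOn_schwarzQuotient (hf : IsInClassF f) :
    DifferentiableOn ℂ (schwarzQuotient f) (ball 0 1) := by
  have h₁ := hf.1.deriv.differentiableOn
  have h₂ := hf.1.deriv.deriv.differentiableOn
  exact h₂.div (by fun_prop) fun z hz => hf.three_mul_deriv_add_ne_zero hz

theorem mapsTo_schwarzQuotient (hf : IsInClassF f) :
    MapsTo (schwarzQuotient f) (ball 0 1) (closedBall 0 1) := by
  refine mapsTo_closedBall_of_norm_mul_le_one hf.differentiableOn_schwarzQuotient fun z hz => ?_
  rw [schwarzQuotient, ← mul_div_assoc, norm_div,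
    div_le_one (norm_pos_iff.2 (hf.three_mul_deriv_add_ne_zero hz))]
  exact (hf.norm_mul_deriv_deriv_lt hz).le

end IsInClassF

theorem third_section_re_pos (f : ℂ → ℂ) (hf : IsInClassF f) (z : ℂ)
    (hz : ‖z‖ < 1/3) :
    0 < (1 + 2 * (iteratedDeriv 2 f 0 / 2) * z
          + 3 * (iteratedDeriv 3 f 0 / 6) * z ^ 2).re := by
  have hpick := norm_deriv_zero_le_one_sub_sq hf.differentiableOn_schwarzQuotient
    hf.mapsTo_schwarzQuotient
  rw [deriv_schwarzQuotient_zero (hf.1 0 (mem_ball_self one_pos)) hf.2.2.1,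
    schwarzQuotient_zero hf.2.2.1] at hpick
  convert re_pos_of_norm_le_one_sub_sq hpick hz using 2
  simp only [iteratedDeriv_succ, iteratedDeriv_zero]
  ring
end
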